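/- arXiv:1910.08280 — 4 statements merged into one kernel-verified Lean document; each statement's English description precedes it below -/
import Mathlib

section
/- Let n ≥ 1, λ > 0, and let K, H ∈ ℝ^{n×n} be symmetric matrices and G ∈ ℝ^{n×n} a matrix such that the 2n × 2n block matrix M = [[K, G], [Gᵀ, H]] is positive semidefinite. Define J̃(α, β) := (1/(2n))‖Kα + Gβ‖² + (1/n)·1ₙᵀ(Gᵀα + Hβ) + (λ/2)(αᵀKα + 2αᵀGβ + βᵀHβ) for α, β ∈ ℝⁿ, where 1ₙ is the all-ones vector. Then K + nλI is invertible, and the pair α̂ := (1/(nλ))(K + nλI)⁻¹G1ₙ, β̂ := −(1/(nλ))1ₙ is a global minimizer of J̃ over ℝⁿ × ℝⁿ, i.e., J̃(α̂, β̂) ≤ J̃(α, β) for all α, β ∈ ℝⁿ. -/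
/-!
In the block coordinates `x = (α, β)` the objective is the quadratic `½ xᵀ Q x + cᵀ x` with
`Q = (1/n) Cᵀ C + λ M`, where `C = [K G]` and `M` is the block Gram matrix, so `Q ⪰ 0`.
Its gradient `Q x + c` factors as `M` applied to the residual
`((1/n)(K α + G β) + λ α, λ β + (1/n) 1)`, which vanishes at `(α̂, β̂)`;
a critical point of a convex quadratic is a global minimizer.
-/

open Matrix

theorem Matrix.PosSemidef.dotProduct_mulVec_half_add_dotProduct_le {ι : Type*} [Fintype ι]
    {Q : Matrix ι ι ℝ} (hQ : Q.PosSemidef) {c x₀ : ι → ℝ} (hx₀ : Q *ᵥ x₀ + c = 0)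
    (x : ι → ℝ) :
    x₀ ⬝ᵥ (Q *ᵥ x₀) / 2 + c ⬝ᵥ x₀ ≤ x ⬝ᵥ (Q *ᵥ x) / 2 + c ⬝ᵥ x := by
  obtain ⟨d, rfl⟩ : ∃ d, x = x₀ + d := ⟨x - x₀, by abel⟩
  have hsymm : d ⬝ᵥ (Q *ᵥ x₀) = x₀ ⬝ᵥ (Q *ᵥ d) := by
    rw [dotProduct_mulVec, ← mulVec_transpose, ← conjTranspose_eq_transpose_of_trivial,
      hQ.isHermitian.eq, dotProduct_comm]
  have hc : c ⬝ᵥ d = -(d ⬝ᵥ (Q *ᵥ x₀)) := by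
    rw [eq_neg_of_add_eq_zero_right hx₀, neg_dotProduct, dotProduct_comm]
  have hd := hQ.dotProduct_mulVec_nonneg d
  rw [star_trivial] at hd
  simp only [mulVec_add, dotProduct_add, add_dotProduct]
  linarith

section

variable {ι : Type*} [Fintype ι]

theorem sumElim_dotProduct_fromBlocks_mulVec_sumElim (A B D : Matrix ι ι ℝ) (α β : ι → ℝ) :
    Sum.elim α β ⬝ᵥ (fromBlocks A B Bᵀ D *ᵥ Sum.elim α β)
      = α ⬝ᵥ (A *ᵥ α) + 2 * (α ⬝ᵥ (B *ᵥ β)) + β ⬝ᵥ (D *ᵥ β) := by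
  rw [fromBlocks_mulVec, Sum.elim_comp_inl, Sum.elim_comp_inr, sumElim_dotProduct_sumElim,
    dotProduct_add, dotProduct_add, mulVec_transpose, dotProduct_comm β, ← dotProduct_mulVec]
  ring

variable (K G H : Matrix ι ι ℝ) (s lam : ℝ)

def lsldHessian : Matrix (ι ⊕ ι) (ι ⊕ ι) ℝ :=
  s • ((fromCols K G)ᵀ * fromCols K G) + lam • fromBlocks K G Gᵀ H

def lsldLinearTerm : ι ⊕ ι → ℝ :=
  s • Sum.elim (G *ᵥ 1) (H *ᵥ 1)

theorem lsldHessian_posSemidef {s lam : ℝ} (hs : 0 ≤ s) (hlam : 0 ≤ lam)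
    (hM : (fromBlocks K G Gᵀ H).PosSemidef) : (lsldHessian K G H s lam).PosSemidef :=
  ((posSemidef_conjTranspose_mul_self _).smul hs).add (hM.smul hlam)

theorem lsld_objective_eq_quadratic (hH : H.IsSymm) (α β : ι → ℝ) :
    s / 2 * ((K *ᵥ α + G *ᵥ β) ⬝ᵥ (K *ᵥ α + G *ᵥ β)) + s * (1 ⬝ᵥ (Gᵀ *ᵥ α + H *ᵥ β))
      + lam / 2 * (α ⬝ᵥ (K *ᵥ α) + 2 * (α ⬝ᵥ (G *ᵥ β)) + β ⬝ᵥ (H *ᵥ β))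
    = Sum.elim α β ⬝ᵥ (lsldHessian K G H s lam *ᵥ Sum.elim α β) / 2
      + lsldLinearTerm G H s ⬝ᵥ Sum.elim α β := by
  have hfit : Sum.elim α β ⬝ᵥ (((fromCols K G)ᵀ * fromCols K G) *ᵥ Sum.elim α β)
      = (K *ᵥ α + G *ᵥ β) ⬝ᵥ (K *ᵥ α + G *ᵥ β) := by
    rw [← mulVec_mulVec, dotProduct_transpose_mulVec, fromCols_mulVec_sumElim]
  have hlin : 1 ⬝ᵥ (Gᵀ *ᵥ α + H *ᵥ β) = Sum.elim (G *ᵥ 1) (H *ᵥ 1) ⬝ᵥ Sum.elim α β := by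
    rw [sumElim_dotProduct_sumElim, dotProduct_add, dotProduct_transpose_mulVec,
      ← dotProduct_transpose_mulVec H, hH.eq, dotProduct_comm β, dotProduct_comm α]
  rw [lsldHessian, lsldLinearTerm, add_mulVec, smul_mulVec, smul_mulVec,
    dotProduct_add (Sum.elim α β), dotProduct_smul, dotProduct_smul, hfit,
    sumElim_dotProduct_fromBlocks_mulVec_sumElim, smul_dotProduct, ← hlin, smul_eq_mul,
    smul_eq_mul, smul_eq_mul]
  ring

theorem lsldHessian_mulVec_add_lsldLinearTerm (hK : K.IsSymm) (α β : ι → ℝ) :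
    lsldHessian K G H s lam *ᵥ Sum.elim α β + lsldLinearTerm G H s
      = fromBlocks K G Gᵀ H *ᵥ Sum.elim (s • (K *ᵥ α + G *ᵥ β) + lam • α) (lam • β + s • 1) := by
  rw [lsldHessian, lsldLinearTerm, add_mulVec, smul_mulVec, smul_mulVec, ← mulVec_mulVec,
    fromCols_mulVec_sumElim, transpose_fromCols, fromRows_mulVec, hK.eq]
  ext (i | i) <;> simp [fromBlocks_mulVec, mulVec_add, mulVec_smul] <;> ring

theorem lsldHessian_mulVec_add_lsldLinearTerm_eq_zero [DecidableEq ι] (hK : K.IsSymm) {μ : ℝ}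
    (hμ : μ ≠ 0) (hsμ : s * μ = lam) (hA : IsUnit (K + μ • (1 : Matrix ι ι ℝ))) :
    lsldHessian K G H s lam *ᵥ
        Sum.elim ((1 / μ) • ((K + μ • (1 : Matrix ι ι ℝ))⁻¹ *ᵥ (G *ᵥ 1))) (-(1 / μ) • 1)
      + lsldLinearTerm G H s = 0 := by
  set α := (1 / μ) • ((K + μ • (1 : Matrix ι ι ℝ))⁻¹ *ᵥ (G *ᵥ 1))
  have hα : K *ᵥ α + μ • α = (1 / μ) • (G *ᵥ 1) := by
    rw [show μ • α = (μ • 1) *ᵥ α by rw [smul_mulVec, one_mulVec], ← add_mulVec, mulVec_smul,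
      mulVec_mulVec, mul_nonsing_inv _ ((isUnit_iff_isUnit_det _).mp hA), one_mulVec]
  have hres : s • (K *ᵥ α + G *ᵥ (-(1 / μ) • 1)) + lam • α = 0 := by
    rw [mulVec_smul G, ← hsμ]
    linear_combination (norm := module) s • hα
  have hβ : lam • (-(1 / μ) • 1) + s • (1 : ι → ℝ) = 0 := by
    rw [← hsμ, smul_smul, ← add_smul, show s * μ * -(1 / μ) + s = 0 by field_simp; ring,
      zero_smul]
  rw [lsldHessian_mulVec_add_lsldLinearTerm K G H s lam hK, hres, hβ, Sum.elim_zero_zero,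
    mulVec_zero]

end

/-- finite-dimensional core of Theorem 1 (analytic solution of K-LSLD). -/
theorem stmt0 (n : ℕ) (hn : 1 ≤ n) (lam : ℝ) (hlam : 0 < lam)
    (K G H : Matrix (Fin n) (Fin n) ℝ) (hK : K.IsSymm) (hH : H.IsSymm)
    (hM : (Matrix.fromBlocks K G Gᵀ H).PosSemidef)
    (J : (Fin n → ℝ) → (Fin n → ℝ) → ℝ)
    (hJ : ∀ α β, J α β =
      (1 / (2 * (n : ℝ))) * ((K *ᵥ α + G *ᵥ β) ⬝ᵥ (K *ᵥ α + G *ᵥ β))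
      + (1 / (n : ℝ)) * ((fun _ => (1 : ℝ)) ⬝ᵥ (Gᵀ *ᵥ α + H *ᵥ β))
      + (lam / 2) * (α ⬝ᵥ (K *ᵥ α) + 2 * (α ⬝ᵥ (G *ᵥ β)) + β ⬝ᵥ (H *ᵥ β))) :
    IsUnit (K + ((n : ℝ) * lam) • (1 : Matrix (Fin n) (Fin n) ℝ)) ∧
    ∀ α β : Fin n → ℝ,
      J ((1 / ((n : ℝ) * lam)) •
          ((K + ((n : ℝ) * lam) • (1 : Matrix (Fin n) (Fin n) ℝ))⁻¹ *ᵥ (G *ᵥ fun _ => (1 : ℝ))))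
        ((-(1 / ((n : ℝ) * lam))) • (fun _ => (1 : ℝ)))
      ≤ J α β := by
  have hn0 : (0 : ℝ) < n := by exact_mod_cast hn
  have hA : (K + ((n : ℝ) * lam) • (1 : Matrix (Fin n) (Fin n) ℝ)).PosDef :=
    PosDef.posSemidef_add (hM.submatrix Sum.inl) (PosDef.one.smul (mul_pos hn0 hlam))
  have hJ_block : ∀ α β, J α β
      = Sum.elim α β ⬝ᵥ (lsldHessian K G H (1 / n) lam *ᵥ Sum.elim α β) / 2
        + lsldLinearTerm G H (1 / n) ⬝ᵥ Sum.elim α β := fun α β => by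
    rw [hJ, ← Pi.one_def, ← lsld_objective_eq_quadratic K G H _ _ hH]
    ring
  have hcrit := lsldHessian_mulVec_add_lsldLinearTerm_eq_zero K G H (1 / n) lam hK
    (mul_pos hn0 hlam).ne' (by field_simp) hA.isUnit
  refine ⟨hA.isUnit, fun α β => ?_⟩
  rw [hJ_block, hJ_block]
  exact (lsldHessian_posSemidef K G H (by positivity) hlam.le hM)
    |>.dotProduct_mulVec_half_add_dotProduct_le hcrit _
end

section
/- Assume the setting of the approximate modal-regression path integral with all model coefficients α₁ = ⋯ = αₙ = 0, and assume additionally that φ is convex. Then for all θ₁, θ₂ ∈ ℝⁿ, D̂[θ₂ | θ₁] ≥ (1/2) { θ₁ᵀH(θ₁)θ₁ − θ₂ᵀH(θ₁)θ₂ − 2(θ₁ − θ₂)ᵀh(θ₁) }. -/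
/-!
For `α = 0`, `r̂ (·, i)` is the derivative of the potential
`s ↦ (1 / (nλ)) ∑ₗ c_il φ((s - y_l)² / (2σ²))`, so the path integral `D̂[θ₂ | θ₁]` telescopes to a
difference of potentials at `θ₂` and `θ₁`. The right-hand side is the same difference with each
`φ(B) - φ(A)`, where `A = (θ₁ᵀvᵢ - y_l)² / (2σ²)` and `B` is its analogue at `θ₂`, replaced by the
tangent approximation `φ'(A) (B - A)`, which is smaller since `φ` is convex and the weights
`c_il / (n²λ)` are nonnegative.
-/

open Matrix

theorem ConvexOn.deriv_mul_sub_le_sub {S : Set ℝ} {f : ℝ → ℝ} {f' x y : ℝ}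
    (hf : ConvexOn ℝ S f) (hx : x ∈ S) (hy : y ∈ S) (hd : HasDerivAt f f' x) :
    f' * (y - x) ≤ f y - f x := by
  rcases lt_trichotomy x y with hxy | rfl | hxy
  · have := hf.le_slope_of_hasDerivAt hx hy hxy hd
    rwa [slope_def_field, le_div_iff₀ (sub_pos.2 hxy)] at this
  · simp
  · have := hf.slope_le_of_hasDerivAt hy hx hxy hd
    rw [slope_def_field, div_le_iff₀ (sub_pos.2 hxy)] at this
    linarith

theorem integral_deriv_comp_segment {G g : ℝ → ℝ} (hG : ∀ x, HasDerivAt G (g x) x)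
    (hg : Continuous g) (a b : ℝ) :
    ∫ t in (0:ℝ)..1, g (a + t * (b - a)) * (b - a) = G b - G a := by
  have hline (t : ℝ) : HasDerivAt (fun t => a + t * (b - a)) (b - a) t := by
    simpa using ((hasDerivAt_id t).mul_const (b - a)).const_add a
  rw [intervalIntegral.integral_eq_sub_of_hasDerivAt (fun t _ => (hG _).comp t (hline t))
    ((by fun_prop : Continuous fun t => g (a + t * (b - a)) * (b - a)).intervalIntegrable 0 1)]
  simp

theorem integral_deriv_comp_dotProduct_segment {m : Type*} [Fintype m] {G g : ℝ → ℝ}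
    (hG : ∀ x, HasDerivAt G (g x) x) (hg : Continuous g) (θ₁ θ₂ u : m → ℝ) :
    ∫ t in (0:ℝ)..1, g ((θ₁ + t • (θ₂ - θ₁)) ⬝ᵥ u) * (u ⬝ᵥ (θ₂ - θ₁))
      = G (θ₂ ⬝ᵥ u) - G (θ₁ ⬝ᵥ u) := by
  simp only [add_dotProduct, smul_dotProduct, sub_dotProduct, dotProduct_comm u, smul_eq_mul]
  exact integral_deriv_comp_segment hG hg _ _

theorem dotProduct_vecMulVec_self_mulVec {m α : Type*} [Fintype m] [CommSemiring α]
    (u θ : m → α) : θ ⬝ᵥ (vecMulVec u u *ᵥ θ) = (θ ⬝ᵥ u) ^ 2 := by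
  rw [vecMulVec_mulVec, op_smul_eq_smul, dotProduct_smul, dotProduct_comm u, smul_eq_mul, sq]

theorem hasDerivAt_sum_mul_comp_sq_sub_div {ι : Type*} [Fintype ι] {φ : ℝ → ℝ}
    (hφ : Differentiable ℝ φ) (w y : ι → ℝ) (σ s : ℝ) :
    HasDerivAt (fun s => ∑ l, w l * φ ((s - y l) ^ 2 / (2 * σ ^ 2)))
      (∑ l, w l * (deriv φ ((s - y l) ^ 2 / (2 * σ ^ 2)) * ((s - y l) / σ ^ 2))) s := by
  refine HasDerivAt.fun_sum fun l _ => ((hφ _).hasDerivAt.comp s ?_).const_mul (w l)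
  convert (((hasDerivAt_id' s).sub_const (y l)).fun_pow 2).div_const (2 * σ ^ 2) using 1
  ring

theorem stmt4_general (n : ℕ) (y : Fin n → ℝ) (v : Fin n → Fin n → ℝ)
    (c : Fin n → Fin n → ℝ) (hc : ∀ i l, 0 ≤ c i l)
    (lam σ : ℝ) (hlam : 0 < lam)
    (φ : ℝ → ℝ) (hφ : ContDiff ℝ 1 φ)
    (φb : ℝ → ℝ) (hφb : ∀ t, φb t = -deriv φ t)
    (hφconv : ConvexOn ℝ Set.univ φ)
    (α : Fin n → ℝ) (hα : ∀ l, α l = 0)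
    (r : ℝ → Fin n → ℝ)
    (hr : ∀ s i, r s i = ∑ l, (α l * φ ((s - y l) ^ 2 / (2 * σ ^ 2))
        + ((y l - s) / ((n : ℝ) * lam * σ ^ 2)) * φb ((s - y l) ^ 2 / (2 * σ ^ 2))) * c i l)
    (Hm : (Fin n → ℝ) → Matrix (Fin n) (Fin n) ℝ)
    (hHm : ∀ θ, Hm θ = (1 / ((n : ℝ) ^ 2 * lam * σ ^ 2)) •
        ∑ i, ∑ l, (φb ((θ ⬝ᵥ v i - y l) ^ 2 / (2 * σ ^ 2)) * c i l) • vecMulVec (v i) (v i))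
    (hv : (Fin n → ℝ) → Fin n → ℝ)
    (hhv : ∀ θ, hv θ = (1 / (n : ℝ)) • ∑ i, ∑ l,
        ((α l * φ ((θ ⬝ᵥ v i - y l) ^ 2 / (2 * σ ^ 2))
          + (y l / ((n : ℝ) * lam * σ ^ 2)) * φb ((θ ⬝ᵥ v i - y l) ^ 2 / (2 * σ ^ 2))) * c i l) • v i)
    (D : (Fin n → ℝ) → (Fin n → ℝ) → ℝ)
    (hD : ∀ θ₁ θ₂ : Fin n → ℝ, D θ₂ θ₁ = (1 / (n : ℝ)) * ∑ i,
        ∫ t in (0:ℝ)..1, r ((θ₁ + t • (θ₂ - θ₁)) ⬝ᵥ v i) i * (v i ⬝ᵥ (θ₂ - θ₁))) :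
    ∀ θ₁ θ₂ : Fin n → ℝ,
      (1 / 2) * (θ₁ ⬝ᵥ (Hm θ₁ *ᵥ θ₁) - θ₂ ⬝ᵥ (Hm θ₁ *ᵥ θ₂)
        - 2 * ((θ₁ - θ₂) ⬝ᵥ hv θ₁)) ≤ D θ₂ θ₁ := by
  intro θ₁ θ₂
  have hφd : Differentiable ℝ φ := hφ.differentiable one_ne_zero
  obtain rfl : φb = fun t => -deriv φ t := funext hφb
  simp only [hα, zero_mul, zero_add] at hr hhv
  have hpot (i : Fin n) (s : ℝ) : HasDerivAt
      (fun s => ∑ l, c i l / (n * lam) * φ ((s - y l) ^ 2 / (2 * σ ^ 2))) (r s i) s := by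
    convert hasDerivAt_sum_mul_comp_sq_sub_div hφd (fun l => c i l / (n * lam)) y σ s using 1
    rw [hr]
    refine Finset.sum_congr rfl fun l _ => ?_
    ring
  have hcont (i : Fin n) : Continuous (r · i) := by
    have := hφ.continuous_deriv le_rfl
    simp only [hr]
    fun_prop
  have hD₂₁ : D θ₂ θ₁ = ∑ i, ∑ l, c i l / (n ^ 2 * lam) *
      (φ ((θ₂ ⬝ᵥ v i - y l) ^ 2 / (2 * σ ^ 2)) - φ ((θ₁ ⬝ᵥ v i - y l) ^ 2 / (2 * σ ^ 2))) := by
    simp only [hD, integral_deriv_comp_dotProduct_segment (hpot _) (hcont _), Finset.mul_sum,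
      ← Finset.sum_sub_distrib]
    refine Finset.sum_congr rfl fun i _ => Finset.sum_congr rfl fun l _ => ?_
    ring
  have hlhs : (1 / 2) * (θ₁ ⬝ᵥ (Hm θ₁ *ᵥ θ₁) - θ₂ ⬝ᵥ (Hm θ₁ *ᵥ θ₂) - 2 * ((θ₁ - θ₂) ⬝ᵥ hv θ₁))
      = ∑ i, ∑ l, c i l / (n ^ 2 * lam) * (deriv φ ((θ₁ ⬝ᵥ v i - y l) ^ 2 / (2 * σ ^ 2)) *
        ((θ₂ ⬝ᵥ v i - y l) ^ 2 / (2 * σ ^ 2) - (θ₁ ⬝ᵥ v i - y l) ^ 2 / (2 * σ ^ 2))) := by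
    simp only [hHm, hhv, smul_mulVec, sum_mulVec, dotProduct_smul, dotProduct_sum,
      dotProduct_vecMulVec_self_mulVec, smul_eq_mul, Finset.mul_sum, ← Finset.sum_sub_distrib,
      sub_dotProduct]
    refine Finset.sum_congr rfl fun i _ => Finset.sum_congr rfl fun l _ => ?_
    ring
  rw [hD₂₁, hlhs]
  gcongr with i _ l _
  · have := hc i l
    positivity
  · exact hφconv.deriv_mul_sub_le_sub trivial trivial (hφd _).hasDerivAt

/-- key lower bound in the proof of Theorem 2 of the paper, obtained from
the first-order convexity inequality. -/
theorem stmt4 (n : ℕ) (hn : 1 ≤ n) (y : Fin n → ℝ) (v : Fin n → Fin n → ℝ)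
    (c : Fin n → Fin n → ℝ) (hc : ∀ i l, 0 ≤ c i l)
    (lam σ : ℝ) (hlam : 0 < lam) (hσ : 0 < σ)
    (φ : ℝ → ℝ) (hφ : ContDiff ℝ 1 φ)
    (φb : ℝ → ℝ) (hφb : ∀ t, φb t = -deriv φ t)
    (hφconv : ConvexOn ℝ Set.univ φ)
    (α : Fin n → ℝ) (hα : ∀ l, α l = 0)
    (r : ℝ → Fin n → ℝ)
    (hr : ∀ s i, r s i = ∑ l, (α l * φ ((s - y l) ^ 2 / (2 * σ ^ 2))
        + ((y l - s) / ((n : ℝ) * lam * σ ^ 2)) * φb ((s - y l) ^ 2 / (2 * σ ^ 2))) * c i l)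
    (Hm : (Fin n → ℝ) → Matrix (Fin n) (Fin n) ℝ)
    (hHm : ∀ θ, Hm θ = (1 / ((n : ℝ) ^ 2 * lam * σ ^ 2)) •
        ∑ i, ∑ l, (φb ((θ ⬝ᵥ v i - y l) ^ 2 / (2 * σ ^ 2)) * c i l) • vecMulVec (v i) (v i))
    (hv : (Fin n → ℝ) → Fin n → ℝ)
    (hhv : ∀ θ, hv θ = (1 / (n : ℝ)) • ∑ i, ∑ l,
        ((α l * φ ((θ ⬝ᵥ v i - y l) ^ 2 / (2 * σ ^ 2))
          + (y l / ((n : ℝ) * lam * σ ^ 2)) * φb ((θ ⬝ᵥ v i - y l) ^ 2 / (2 * σ ^ 2))) * c i l) • v i)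
    (D : (Fin n → ℝ) → (Fin n → ℝ) → ℝ)
    (hD : ∀ θ₁ θ₂ : Fin n → ℝ, D θ₂ θ₁ = (1 / (n : ℝ)) * ∑ i,
        ∫ t in (0:ℝ)..1, r ((θ₁ + t • (θ₂ - θ₁)) ⬝ᵥ v i) i * (v i ⬝ᵥ (θ₂ - θ₁))) :
    ∀ θ₁ θ₂ : Fin n → ℝ,
      (1 / 2) * (θ₁ ⬝ᵥ (Hm θ₁ *ᵥ θ₁) - θ₂ ⬝ᵥ (Hm θ₁ *ᵥ θ₂)
        - 2 * ((θ₁ - θ₂) ⬝ᵥ hv θ₁)) ≤ D θ₂ θ₁ :=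
  stmt4_general n y v c hc lam σ hlam φ hφ φb hφb hφconv α hα r hr Hm hHm hv hhv D hD
end

section
/- Let p : ℝ → ℝ be an everywhere positive differentiable function and r : ℝ → ℝ a differentiable function. Assume that r²·p, r·p', r'·p, and (p'/p)²·p are integrable on ℝ, that the derivative of y ↦ r(y)p(y) is integrable on ℝ, and that r(y)p(y) → 0 as y → +∞ and as y → −∞. Then (1/2)∫ℝ (r(y) − p'(y)/p(y))² p(y) dy = (1/2)∫ℝ r(y)² p(y) dy + ∫ℝ r'(y) p(y) dy + (1/2)∫ℝ (p'(y)/p(y))² p(y) dy. -/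
/-!
Expanding the square splits the integrand into `r²p - 2 r p' + (p'/p)²p`. Integration by parts,
with boundary terms `lim r p = 0` at `±∞`, turns the cross term `-∫ r p'` into `∫ r' p`.
-/

open MeasureTheory

theorem sq_sub_div_mul_eq {a b c : ℝ} (hc : c ≠ 0) :
    (a - b / c) ^ 2 * c = a ^ 2 * c - 2 * (a * b) + (b / c) ^ 2 * c := by
  field_simp
  ring

theorem integral_sq_sub_div_mul {α : Type*} [MeasurableSpace α] {μ : Measure α}
    {f g w : α → ℝ} (hw : ∀ x, w x ≠ 0)
    (hf : Integrable (fun x => f x ^ 2 * w x) μ) (hfg : Integrable (fun x => f x * g x) μ)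
    (hg : Integrable (fun x => (g x / w x) ^ 2 * w x) μ) :
    ∫ x, (f x - g x / w x) ^ 2 * w x ∂μ
      = (∫ x, f x ^ 2 * w x ∂μ) - 2 * (∫ x, f x * g x ∂μ) + ∫ x, (g x / w x) ^ 2 * w x ∂μ := by
  have hcross : Integrable (fun x => 2 * (f x * g x)) μ := hfg.const_mul 2
  have hdiff : Integrable (fun x => f x ^ 2 * w x - 2 * (f x * g x)) μ := hf.sub hcross
  simp_rw [sq_sub_div_mul_eq (hw _)]
  rw [integral_add hdiff hg, integral_sub hf hcross, integral_const_mul]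

theorem stmt8_general (p r : ℝ → ℝ) (hp : ∀ y, 0 < p y)
    (hpd : Differentiable ℝ p) (hrd : Differentiable ℝ r)
    (h1 : Integrable (fun y => r y ^ 2 * p y))
    (h2 : Integrable (fun y => r y * deriv p y))
    (h3 : Integrable (fun y => deriv r y * p y))
    (h4 : Integrable (fun y => (deriv p y / p y) ^ 2 * p y))
    (htop : Filter.Tendsto (fun y => r y * p y) Filter.atTop (nhds 0))
    (hbot : Filter.Tendsto (fun y => r y * p y) Filter.atBot (nhds 0)) :
    (1 / 2) * ∫ y, (r y - deriv p y / p y) ^ 2 * p y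
      = (1 / 2) * (∫ y, r y ^ 2 * p y) + (∫ y, deriv r y * p y)
        + (1 / 2) * ∫ y, (deriv p y / p y) ^ 2 * p y := by
  have parts : ∫ y, r y * deriv p y = 0 - 0 - ∫ y, deriv r y * p y :=
    integral_mul_deriv_eq_deriv_mul (fun y _ => (hrd y).hasDerivAt)
      (fun y _ => (hpd y).hasDerivAt) h2 h3 hbot htop
  rw [integral_sq_sub_div_mul (fun y => (hp y).ne') h1 h2 h4, parts]
  ring

/-- decomposition of the (one-dimensional) Fisher divergence via
integration by parts under the vanishing-at-infinity condition. -/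
theorem stmt8 (p r : ℝ → ℝ) (hp : ∀ y, 0 < p y)
    (hpd : Differentiable ℝ p) (hrd : Differentiable ℝ r)
    (h1 : Integrable (fun y => r y ^ 2 * p y))
    (h2 : Integrable (fun y => r y * deriv p y))
    (h3 : Integrable (fun y => deriv r y * p y))
    (h4 : Integrable (fun y => (deriv p y / p y) ^ 2 * p y))
    (h5 : Integrable (deriv fun y => r y * p y))
    (htop : Filter.Tendsto (fun y => r y * p y) Filter.atTop (nhds 0))
    (hbot : Filter.Tendsto (fun y => r y * p y) Filter.atBot (nhds 0)) :
    (1 / 2) * ∫ y, (r y - deriv p y / p y) ^ 2 * p y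
      = (1 / 2) * (∫ y, r y ^ 2 * p y) + (∫ y, deriv r y * p y)
        + (1 / 2) * ∫ y, (deriv p y / p y) ^ 2 * p y :=
  stmt8_general p r hp hpd hrd h1 h2 h3 h4 htop hbot
end

section
/- Let n ≥ 2, λ > 0, let K ∈ ℝ^{n×n} be symmetric positive semidefinite, and let G ∈ ℝ^{n×n}. Set L := (K + (n−1)λ I)⁻¹, c := 1/((n−1)λ), E := 1ₙ1ₙᵀ − I (the matrix with zeros on the diagonal and ones elsewhere), and S := c·G·E. Then L is symmetric positive definite, so L_{ll} > 0 for every l; let T be the diagonal matrix with T_{ll} := (LS)_{ll}/L_{ll}. For each l ∈ {1,…,n}, define α̃^{(l)} := L(c·G(1ₙ − e_l) + t_l e_l), where t_l ∈ ℝ is chosen so that the l-th coordinate of α̃^{(l)} is zero. Then t_l = −(LS)_{ll}/L_{ll} is the unique such choice, and the matrix A ∈ ℝ^{n×n} whose l-th column is α̃^{(l)} satisfies A = L(S − T). -/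
open Matrix
open scoped ComplexOrder

/-!
`L = (K + (n-1)λ I)⁻¹` is positive definite as the inverse of a positive semidefinite matrix
shifted by a positive multiple of the identity, so its diagonal is positive. Column `l` of
`S = c G E` is `c G (1 - e_l)`, so `α̃⁽ˡ⁾ = L (S e_l + t e_l)` has `l`-th coordinate
`(L S)_{ll} + t L_{ll}`, which vanishes exactly for `t = -(L S)_{ll} / L_{ll}`. Finally, the matrix
with columns `L (S e_l + d_l e_l)` is `L (S + diag d)`.
-/

namespace Matrix

lemma posDef_add_smul_one {n 𝕜 : Type*} [DecidableEq n] [RCLike 𝕜] {K : Matrix n n 𝕜}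
    (hK : K.PosSemidef) {μ : ℝ} (hμ : 0 < μ) : (K + μ • (1 : Matrix n n 𝕜)).PosDef :=
  PosDef.posSemidef_add hK (PosDef.one.smul hμ)

variable {n R : Type*} [Fintype n]

lemma col_mul [NonUnitalNonAssocSemiring R] (A B : Matrix n n R) (j : n) :
    (A * B).col j = A *ᵥ B.col j :=
  rfl

variable [DecidableEq n]

lemma col_mul_vecMulVec_one_sub_one [Ring R] (G : Matrix n n R) (l : n) :
    (G * (vecMulVec (fun _ => 1) (fun _ => 1) - 1)).col l
      = G *ᵥ ((fun _ => 1) - Pi.single l 1) := by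
  rw [col_mul]
  congr 1
  ext i
  simp [col, vecMulVec_apply, one_apply, Pi.single_apply, eq_comm]

lemma mulVec_add_smul_single_apply_eq_zero_iff [Field R] (L : Matrix n n R) (s : n → R)
    {l : n} (hl : L l l ≠ 0) (t : R) :
    (L *ᵥ (s + t • Pi.single l 1)) l = 0 ↔ t = -(L *ᵥ s) l / L l l := by
  rw [mulVec_add, mulVec_smul, mulVec_single_one, eq_div_iff hl, eq_neg_iff_add_eq_zero]
  simp [col, add_comm]

lemma of_mulVec_col_add_smul_single [CommRing R] (L S : Matrix n n R) (d : n → R) :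
    of (fun i l => (L *ᵥ (S.col l + d l • Pi.single l 1)) i) = L * (S + diagonal d) := by
  ext i l
  rw [of_apply, mulVec_add, mulVec_smul, ← col_mul, mulVec_single_one]
  simp [mul_add, mul_comm]

end Matrix

theorem stmt15_general (n : ℕ) (hn : 2 ≤ n) (lam : ℝ) (hlam : 0 < lam)
    (K G : Matrix (Fin n) (Fin n) ℝ) (hK : K.PosSemidef)
    (L : Matrix (Fin n) (Fin n) ℝ)
    (hL : L = (K + (((n : ℝ) - 1) * lam) • (1 : Matrix (Fin n) (Fin n) ℝ))⁻¹)
    (c : ℝ)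
    (E : Matrix (Fin n) (Fin n) ℝ)
    (hE : E = vecMulVec (fun _ => (1 : ℝ)) (fun _ => (1 : ℝ)) - 1)
    (S : Matrix (Fin n) (Fin n) ℝ) (hS : S = c • (G * E)) :
    L.PosDef ∧ (∀ l, 0 < L l l) ∧
    (∀ (l : Fin n) (t : ℝ),
      (L *ᵥ (c • (G *ᵥ ((fun _ => (1 : ℝ)) - (Pi.single l 1 : Fin n → ℝ)))
          + t • (Pi.single l 1 : Fin n → ℝ))) l = 0
        ↔ t = -((L * S) l l) / L l l) ∧
    (Matrix.of fun i l =>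
        (L *ᵥ (c • (G *ᵥ ((fun _ => (1 : ℝ)) - (Pi.single l 1 : Fin n → ℝ)))
          + (-((L * S) l l) / L l l) • (Pi.single l 1 : Fin n → ℝ))) i)
      = L * (S - Matrix.diagonal fun l => (L * S) l l / L l l) := by
  have hshift : 0 < ((n : ℝ) - 1) * lam :=
    mul_pos (by linarith [show (2 : ℝ) ≤ n by exact_mod_cast hn]) hlam
  have hLpos : L.PosDef := hL ▸ (posDef_add_smul_one hK hshift).inv
  have hcol : ∀ l, c • (G *ᵥ ((fun _ => 1) - Pi.single l 1)) = S.col l := fun l => by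
    rw [hS, hE, ← col_mul_vecMulVec_one_sub_one]
    rfl
  refine ⟨hLpos, fun l => hLpos.diag_pos, fun l t => ?_, ?_⟩
  · rw [hcol, mulVec_add_smul_single_apply_eq_zero_iff _ _ hLpos.diag_pos.ne', ← col_mul]
    rfl
  · simp_rw [hcol]
    rw [of_mulVec_col_add_smul_single, sub_eq_add_neg, diagonal_neg]
    simp only [neg_div]

/-- closed-form matrix expression assembling all leave-one-out
coefficient vectors (Appendix B of the paper). -/
theorem stmt15 (n : ℕ) (hn : 2 ≤ n) (lam : ℝ) (hlam : 0 < lam)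
    (K G : Matrix (Fin n) (Fin n) ℝ) (hK : K.PosSemidef)
    (L : Matrix (Fin n) (Fin n) ℝ)
    (hL : L = (K + (((n : ℝ) - 1) * lam) • (1 : Matrix (Fin n) (Fin n) ℝ))⁻¹)
    (c : ℝ) (hc : c = 1 / (((n : ℝ) - 1) * lam))
    (E : Matrix (Fin n) (Fin n) ℝ)
    (hE : E = vecMulVec (fun _ => (1 : ℝ)) (fun _ => (1 : ℝ)) - 1)
    (S : Matrix (Fin n) (Fin n) ℝ) (hS : S = c • (G * E)) :
    L.PosDef ∧ (∀ l, 0 < L l l) ∧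
    (∀ (l : Fin n) (t : ℝ),
      (L *ᵥ (c • (G *ᵥ ((fun _ => (1 : ℝ)) - (Pi.single l 1 : Fin n → ℝ)))
          + t • (Pi.single l 1 : Fin n → ℝ))) l = 0
        ↔ t = -((L * S) l l) / L l l) ∧
    (Matrix.of fun i l =>
        (L *ᵥ (c • (G *ᵥ ((fun _ => (1 : ℝ)) - (Pi.single l 1 : Fin n → ℝ)))
          + (-((L * S) l l) / L l l) • (Pi.single l 1 : Fin n → ℝ))) i)
      = L * (S - Matrix.diagonal fun l => (L * S) l l / L l l) :=
  stmt15_general n hn lam hlam K G hK L hL c E hE S hS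
end
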